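/- Let F, H, K be complex Hilbert spaces and A : F → H, B : F → K bounded linear operators. The following are equivalent: (i) for every sequence (x_n) in F and every x ∈ K, if A x_n → 0 and B x_n → x then x = 0; (ii) the preimage (B*)⁻¹(range(A*)) is dense in K. -/

import Mathlib

/-!
Condition (i) says that `(0, y)` lies in the closure of the range of `x ↦ (A x, B x)` in the
Hilbert sum `H ⊕ K` only for `y = 0`. That closure is the orthogonal complement of the kernel of
the adjoint `(h, k) ↦ A* h + B* k`, and `(h, k) ↦ k` maps this kernel onto `(B*)⁻¹(range A*)`
(as `B* k = A* (-h)`); so `(0, y)` lies in the closure iff `y ⊥ (B*)⁻¹(range A*)`, and (i) says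
that this subspace has trivial orthogonal complement, i.e. is dense.
-/

open Filter Topology

namespace ContinuousLinearMap

variable {𝕜 F H K : Type*} [RCLike 𝕜]
  [NormedAddCommGroup F] [InnerProductSpace 𝕜 F]
  [NormedAddCommGroup H] [InnerProductSpace 𝕜 H]
  [NormedAddCommGroup K] [InnerProductSpace 𝕜 K]

noncomputable def prodL2 (A : F →L[𝕜] H) (B : F →L[𝕜] K) : F →L[𝕜] WithLp 2 (H × K) :=
  (WithLp.prodContinuousLinearEquiv 2 𝕜 H K).symm.toContinuousLinearMap ∘L A.prod B

@[simp]
theorem prodL2_apply (A : F →L[𝕜] H) (B : F →L[𝕜] K) (x : F) :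
    A.prodL2 B x = WithLp.toLp 2 (A x, B x) :=
  rfl

theorem tendsto_prodL2_comp_iff (A : F →L[𝕜] H) (B : F →L[𝕜] K) {x : ℕ → F} {a : H} {b : K} :
    Tendsto (fun n => A.prodL2 B (x n)) atTop (𝓝 (WithLp.toLp 2 (a, b))) ↔
      Tendsto (fun n => A (x n)) atTop (𝓝 a) ∧ Tendsto (fun n => B (x n)) atTop (𝓝 b) := by
  rw [(WithLp.prodContinuousLinearEquiv 2 𝕜 H K).toHomeomorph.isInducing.tendsto_nhds_iff,
    nhds_prod_eq]
  exact tendsto_prod_iff'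

variable [CompleteSpace F] [CompleteSpace H] [CompleteSpace K]

theorem adjoint_prodL2_apply (A : F →L[𝕜] H) (B : F →L[𝕜] K) (z : WithLp 2 (H × K)) :
    adjoint (A.prodL2 B) z = adjoint A z.fst + adjoint B z.snd := by
  refine ext_inner_left 𝕜 fun x => ?_
  simp [adjoint_inner_right, inner_add_right]

theorem toLp_zero_mem_closure_range_prodL2_iff (A : F →L[𝕜] H) (B : F →L[𝕜] K) (y : K) :
    WithLp.toLp 2 (0, y) ∈ closure (Set.range (A.prodL2 B)) ↔
      y ∈ ((LinearMap.range (adjoint A).toLinearMap).comap (adjoint B).toLinearMap)ᗮ := by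
  rw [← coe_coe, ← LinearMap.coe_range, ← Submodule.topologicalClosure_coe, SetLike.mem_coe,
    ← Submodule.orthogonal_orthogonal_eq_closure, orthogonal_range,
    Submodule.mem_orthogonal, Submodule.mem_orthogonal]
  constructor
  · rintro h u ⟨f, hf⟩
    have hf : adjoint A f = adjoint B u := hf
    simpa using h (WithLp.toLp 2 (-f, u)) (by simp [adjoint_prodL2_apply, hf])
  · intro h z hz
    have hz : adjoint A z.fst + adjoint B z.snd = 0 := by simpa [adjoint_prodL2_apply] using hz
    simpa using h z.snd ⟨-z.fst, by simpa using neg_eq_of_add_eq_zero_right hz⟩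

theorem exists_tendsto_iff_mem_orthogonal (A : F →L[𝕜] H) (B : F →L[𝕜] K) (y : K) :
    (∃ x : ℕ → F, Tendsto (fun n => A (x n)) atTop (𝓝 0) ∧
        Tendsto (fun n => B (x n)) atTop (𝓝 y)) ↔
      y ∈ ((LinearMap.range (adjoint A).toLinearMap).comap (adjoint B).toLinearMap)ᗮ := by
  rw [← toLp_zero_mem_closure_range_prodL2_iff, mem_closure_iff_seq_limit]
  constructor
  · rintro ⟨x, hx⟩
    exact ⟨_, fun n => ⟨x n, rfl⟩, (tendsto_prodL2_comp_iff A B).2 hx⟩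
  · rintro ⟨u, hu, hlim⟩
    choose x hx using hu
    obtain rfl : u = fun n => A.prodL2 B (x n) := funext fun n => (hx n).symm
    exact ⟨x, (tendsto_prodL2_comp_iff A B).1 hlim⟩

end ContinuousLinearMap

theorem stmt_13 {F H K : Type*}
    [NormedAddCommGroup F] [InnerProductSpace ℂ F] [CompleteSpace F]
    [NormedAddCommGroup H] [InnerProductSpace ℂ H] [CompleteSpace H]
    [NormedAddCommGroup K] [InnerProductSpace ℂ K] [CompleteSpace K]
    (A : F →L[ℂ] H) (B : F →L[ℂ] K) :
    (∀ (x : ℕ → F) (y : K), Filter.Tendsto (fun n => A (x n)) Filter.atTop (nhds 0) →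
        Filter.Tendsto (fun n => B (x n)) Filter.atTop (nhds y) → y = 0) ↔
      Dense {k : K |
        ContinuousLinearMap.adjoint B k ∈ LinearMap.range (ContinuousLinearMap.adjoint A).toLinearMap} := by
  change _ ↔ Dense ((LinearMap.range (ContinuousLinearMap.adjoint A).toLinearMap).comap
    (ContinuousLinearMap.adjoint B).toLinearMap : Set K)
  rw [Submodule.dense_iff_topologicalClosure_eq_top, Submodule.topologicalClosure_eq_top_iff,
    Submodule.eq_bot_iff, forall_comm]
  refine forall_congr' fun y => ?_
  rw [← ContinuousLinearMap.exists_tendsto_iff_mem_orthogonal]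
  simp only [forall_exists_index, and_imp]
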